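/- arXiv:0706.1745 — 2 statements merged into one kernel-verified Lean document; each statement's English description precedes it below -/
import Mathlib

section
/- (Conservation law for Ỹ, general f.) Let f : ℝ → ℝ be continuous and F : ℝ → ℝ differentiable with F′ = f. Let u be a C² solution of Δ_{H¹}u + f(u) = 0 on an open set Ω ⊆ ℝ³. Define on Ω: υ₁ = −4xy·u_t² − u_x·u_y − 2x·u_x·u_t − 2y·u_y·u_t, υ₂ = ½u_x² − ½u_y² + 2(3x² + y²)u_t² + 2y·u_x·u_t − 2x·u_y·u_t − F(u), υ₃ = x·u_x² + 3x·u_y² − 4x(x²+y²)u_t² − 2y·u_x·u_y − 4(x²+y²)u_y·u_t − 2x·F(u). Then ∂υ₁/∂x + ∂υ₂/∂y + ∂υ₃/∂t = 0 at every point of Ω. -/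
/-!
The vector field `Ỹ = ∂_y + 2x ∂_t` commutes with the horizontal fields `X = ∂_x + 2y ∂_t` and
`Y = ∂_y − 2x ∂_t`, hence with `Δ_{H¹} = X² + Y²`, and it is a variational symmetry of the
Lagrangian `½((Xu)² + (Yu)²) − F(u)`. The flux `υ` is the Noether current of this symmetry: for
every `u` that is `C²` near a point, `Div υ = −(Ỹu)(Δ_{H¹}u + f(u))` there, a polynomial identity in
the 2-jet of `u` once the mixed second derivatives are identified. On solutions the right side
vanishes.
-/

/-- Partial derivative with respect to the first coordinate (x). -/
noncomputable def pdx (u : ℝ × ℝ × ℝ → ℝ) : ℝ × ℝ × ℝ → ℝ :=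
  fun p => fderiv ℝ u p (1, 0, 0)

/-- Partial derivative with respect to the second coordinate (y). -/
noncomputable def pdy (u : ℝ × ℝ × ℝ → ℝ) : ℝ × ℝ × ℝ → ℝ :=
  fun p => fderiv ℝ u p (0, 1, 0)

/-- Partial derivative with respect to the third coordinate (t). -/
noncomputable def pdt (u : ℝ × ℝ × ℝ → ℝ) : ℝ × ℝ × ℝ → ℝ :=
  fun p => fderiv ℝ u p (0, 0, 1)

/-- The Kohn–Laplace operator on the Heisenberg group H¹:
`Δ u = u_xx + u_yy + 4(x²+y²) u_tt + 4y u_xt − 4x u_yt`. -/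
noncomputable def KohnLaplace (u : ℝ × ℝ × ℝ → ℝ) : ℝ × ℝ × ℝ → ℝ :=
  fun p => pdx (pdx u) p + pdy (pdy u) p
    + 4 * (p.1 ^ 2 + p.2.1 ^ 2) * pdt (pdt u) p
    + 4 * p.2.1 * pdt (pdx u) p - 4 * p.1 * pdt (pdy u) p

noncomputable def yTilde (u : ℝ × ℝ × ℝ → ℝ) : ℝ × ℝ × ℝ → ℝ :=
  fun p => pdy u p + 2 * p.1 * pdt u p

noncomputable def divergence (v₁ v₂ v₃ : ℝ × ℝ × ℝ → ℝ) : ℝ × ℝ × ℝ → ℝ :=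
  fun p => pdx v₁ p + pdy v₂ p + pdt v₃ p

noncomputable def yTildeFlux₁ (u : ℝ × ℝ × ℝ → ℝ) : ℝ × ℝ × ℝ → ℝ := fun q =>
  -4 * q.1 * q.2.1 * (pdt u q) ^ 2 - pdx u q * pdy u q
    - 2 * q.1 * pdx u q * pdt u q - 2 * q.2.1 * pdy u q * pdt u q

noncomputable def yTildeFlux₂ (u : ℝ × ℝ × ℝ → ℝ) (F : ℝ → ℝ) : ℝ × ℝ × ℝ → ℝ := fun q =>
  (1 / 2) * (pdx u q) ^ 2 - (1 / 2) * (pdy u q) ^ 2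
    + 2 * (3 * q.1 ^ 2 + q.2.1 ^ 2) * (pdt u q) ^ 2
    + 2 * q.2.1 * pdx u q * pdt u q - 2 * q.1 * pdy u q * pdt u q - F (u q)

noncomputable def yTildeFlux₃ (u : ℝ × ℝ × ℝ → ℝ) (F : ℝ → ℝ) : ℝ × ℝ × ℝ → ℝ := fun q =>
  q.1 * (pdx u q) ^ 2 + 3 * q.1 * (pdy u q) ^ 2
    - 4 * q.1 * (q.1 ^ 2 + q.2.1 ^ 2) * (pdt u q) ^ 2
    - 2 * q.2.1 * pdx u q * pdy u q
    - 4 * (q.1 ^ 2 + q.2.1 ^ 2) * pdy u q * pdt u q - 2 * q.1 * F (u q)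

theorem divergence_yTildeFlux {u : ℝ × ℝ × ℝ → ℝ} {F : ℝ → ℝ} {c : ℝ} {p : ℝ × ℝ × ℝ}
    (hu : ContDiffAt ℝ 2 u p) (hF : HasDerivAt F c (u p)) :
    divergence (yTildeFlux₁ u) (yTildeFlux₂ u F) (yTildeFlux₃ u F) p
      = -yTilde u p * (KohnLaplace u p + c) := by
  have hu₁ : DifferentiableAt ℝ u p := hu.differentiableAt two_ne_zero
  have hu₂ : DifferentiableAt ℝ (fderiv ℝ u) p :=
    (hu.fderiv_right (m := 1) le_rfl).differentiableAt one_ne_zero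
  have hsymm : IsSymmSndFDerivAt ℝ u p := hu.isSymmSndFDerivAt (by simp)
  have hF₁ : DifferentiableAt ℝ F (u p) := hF.differentiableAt
  have hFu : fderiv ℝ (fun q => F (u q)) p = c • fderiv ℝ u p :=
    (hF.comp_hasFDerivAt p hu₁.hasFDerivAt).fderiv
  unfold divergence yTildeFlux₁ yTildeFlux₂ yTildeFlux₃ yTilde KohnLaplace pdx pdy pdt
  simp (disch := fun_prop) only [fderiv_fun_sub, fderiv_fun_add, fderiv_fun_mul, fderiv_fun_pow,
    fderiv_fun_neg, fderiv_fun_const, fderiv_fun_id, fderiv.fst, fderiv_snd, fderiv_clm_apply, hFu,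
    sub_apply, add_apply, neg_apply, smul_apply, zero_apply, ContinuousLinearMap.comp_apply,
    ContinuousLinearMap.flip_apply, ContinuousLinearMap.coe_fst', ContinuousLinearMap.coe_snd',
    ContinuousLinearMap.comp_zero, ContinuousLinearMap.comp_id, Pi.zero_apply, smul_eq_mul,
    nsmul_eq_mul, Nat.add_one_sub_one, pow_one]
  rw [hsymm.eq (0, 1, 0) (1, 0, 0), hsymm.eq (0, 0, 1) (1, 0, 0), hsymm.eq (0, 0, 1) (0, 1, 0)]
  ring

theorem conservation_law_Ytilde_general
    (f F : ℝ → ℝ) (hF : ∀ s, HasDerivAt F (f s) s)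
    (Ω : Set (ℝ × ℝ × ℝ)) (hΩ : IsOpen Ω)
    (u : ℝ × ℝ × ℝ → ℝ) (hu : ContDiffOn ℝ 2 u Ω)
    (hsol : ∀ p ∈ Ω, KohnLaplace u p + f (u p) = 0) :
    ∀ p ∈ Ω,
      pdx (fun q => -4 * q.1 * q.2.1 * (pdt u q) ^ 2 - pdx u q * pdy u q
          - 2 * q.1 * pdx u q * pdt u q - 2 * q.2.1 * pdy u q * pdt u q) p
      + pdy (fun q => (1 / 2) * (pdx u q) ^ 2 - (1 / 2) * (pdy u q) ^ 2
          + 2 * (3 * q.1 ^ 2 + q.2.1 ^ 2) * (pdt u q) ^ 2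
          + 2 * q.2.1 * pdx u q * pdt u q - 2 * q.1 * pdy u q * pdt u q - F (u q)) p
      + pdt (fun q => q.1 * (pdx u q) ^ 2 + 3 * q.1 * (pdy u q) ^ 2
          - 4 * q.1 * (q.1 ^ 2 + q.2.1 ^ 2) * (pdt u q) ^ 2
          - 2 * q.2.1 * pdx u q * pdy u q
          - 4 * (q.1 ^ 2 + q.2.1 ^ 2) * pdy u q * pdt u q - 2 * q.1 * F (u q)) p = 0 := by
  intro p hp
  have hdiv := divergence_yTildeFlux (hu.contDiffAt (hΩ.mem_nhds hp)) (hF (u p))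
  rwa [hsol p hp, mul_zero] at hdiv

/-- conservation law for the Noether symmetry Ỹ, general f:
for a C² solution of Δ_{H¹}u + f(u) = 0 on an open set Ω, Div(υ) = 0 with
υ₁ = −4xy u_t² − u_x u_y − 2x u_x u_t − 2y u_y u_t,
υ₂ = ½u_x² − ½u_y² + 2(3x²+y²)u_t² + 2y u_x u_t − 2x u_y u_t − F(u),
υ₃ = x u_x² + 3x u_y² − 4x(x²+y²)u_t² − 2y u_x u_y − 4(x²+y²)u_y u_t − 2x F(u). -/
theorem conservation_law_Ytilde
    (f F : ℝ → ℝ) (hf : Continuous f) (hF : ∀ s, HasDerivAt F (f s) s)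
    (Ω : Set (ℝ × ℝ × ℝ)) (hΩ : IsOpen Ω)
    (u : ℝ × ℝ × ℝ → ℝ) (hu : ContDiffOn ℝ 2 u Ω)
    (hsol : ∀ p ∈ Ω, KohnLaplace u p + f (u p) = 0) :
    ∀ p ∈ Ω,
      pdx (fun q => -4 * q.1 * q.2.1 * (pdt u q) ^ 2 - pdx u q * pdy u q
          - 2 * q.1 * pdx u q * pdt u q - 2 * q.2.1 * pdy u q * pdt u q) p
      + pdy (fun q => (1 / 2) * (pdx u q) ^ 2 - (1 / 2) * (pdy u q) ^ 2
          + 2 * (3 * q.1 ^ 2 + q.2.1 ^ 2) * (pdt u q) ^ 2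
          + 2 * q.2.1 * pdx u q * pdt u q - 2 * q.1 * pdy u q * pdt u q - F (u q)) p
      + pdt (fun q => q.1 * (pdx u q) ^ 2 + 3 * q.1 * (pdy u q) ^ 2
          - 4 * q.1 * (q.1 ^ 2 + q.2.1 ^ 2) * (pdt u q) ^ 2
          - 2 * q.2.1 * pdx u q * pdy u q
          - 4 * (q.1 ^ 2 + q.2.1 ^ 2) * pdy u q * pdt u q - 2 * q.1 * F (u q)) p = 0 :=
  conservation_law_Ytilde_general f F hF Ω hΩ u hu hsol
end

section
/- (Conservation law for V₂, homogeneous case.) Let u be a C² solution of Δ_{H¹}u = 0 on an open set Ω ⊆ ℝ³. Define on Ω: B₁ = −½(t−4xy)u_x² + ½(t−4xy)u_y² + [2t(x²+3y²)−4xy(x²+y²)]u_t² − (3x²−y²)u_x u_y + 2(x³+ty+xy²)u_x u_t − 2(tx−x²y−y³)u_y u_t + 2y·u·u_x + 4y²·u·u_t; B₂ = ½(3x²−y²)u_x² − ½(3x²−y²)u_y² + 2(x⁴−2txy−y⁴)u_t² − (t−4xy)u_x u_y + 2(tx−x²y−y³)u_x u_t + 2(x³+ty+xy²)u_y u_t +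 2y·u·u_y − 4xy·u·u_t − u²; B₃ = (7xy²−x³−3ty)u_x² + (5x³−3xy²−ty)u_y² + 4(x²+y²)(x³+ty+xy²)u_t² + 2(tx−7x²y+y³)u_x u_y − 4(t−4xy)(x²+y²)u_x u_t − 4(3x⁴+2x²y²−y⁴)u_y u_t + 2x·u² + 4y²·u·u_x − 4xy·u·u_y + 8y(x²+y²)·u·u_t. Then ∂B₁/∂x + ∂B₂/∂y + ∂B₃/∂t = 0 at every point of Ω. -/
theorem fderiv_fderiv_apply_eq {𝕜 E F : Type*} [NontriviallyNormedField 𝕜]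
    [NormedAddCommGroup E] [NormedSpace 𝕜 E] [NormedAddCommGroup F] [NormedSpace 𝕜 F]
    {u : E → F} {p : E}
    (h : DifferentiableAt 𝕜 (fderiv 𝕜 u) p) (c w : E) :
    fderiv 𝕜 (fun q => fderiv 𝕜 u q c) p w = fderiv 𝕜 (fderiv 𝕜 u) p w c := by
  simp [fderiv_clm_apply h (differentiableAt_const c)]

noncomputable section NoetherCurrent

variable (u : ℝ × ℝ × ℝ → ℝ)

def noetherCurrentV2₁ : ℝ × ℝ × ℝ → ℝ := fun q =>
  let x := q.1; let y := q.2.1; let t := q.2.2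
  let ux := pdx u q; let uy := pdy u q; let ut := pdt u q; let v := u q;
  (-(1 / 2) * (t - 4 * x * y) * ux ^ 2
  + (1 / 2) * (t - 4 * x * y) * uy ^ 2
  + (2 * t * (x ^ 2 + 3 * y ^ 2) - 4 * x * y * (x ^ 2 + y ^ 2)) * ut ^ 2
  - (3 * x ^ 2 - y ^ 2) * ux * uy
  + 2 * (x ^ 3 + t * y + x * y ^ 2) * ux * ut
  - 2 * (t * x - x ^ 2 * y - y ^ 3) * uy * ut
  + 2 * y * v * ux + 4 * y ^ 2 * v * ut)

def noetherCurrentV2₂ : ℝ × ℝ × ℝ → ℝ := fun q =>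
  let x := q.1; let y := q.2.1; let t := q.2.2
  let ux := pdx u q; let uy := pdy u q; let ut := pdt u q; let v := u q;
  ((1 / 2) * (3 * x ^ 2 - y ^ 2) * ux ^ 2
  - (1 / 2) * (3 * x ^ 2 - y ^ 2) * uy ^ 2
  + 2 * (x ^ 4 - 2 * t * x * y - y ^ 4) * ut ^ 2
  - (t - 4 * x * y) * ux * uy
  + 2 * (t * x - x ^ 2 * y - y ^ 3) * ux * ut
  + 2 * (x ^ 3 + t * y + x * y ^ 2) * uy * ut
  + 2 * y * v * uy - 4 * x * y * v * ut - v ^ 2)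

def noetherCurrentV2₃ : ℝ × ℝ × ℝ → ℝ := fun q =>
  let x := q.1; let y := q.2.1; let t := q.2.2
  let ux := pdx u q; let uy := pdy u q; let ut := pdt u q; let v := u q;
  ((7 * x * y ^ 2 - x ^ 3 - 3 * t * y) * ux ^ 2
  + (5 * x ^ 3 - 3 * x * y ^ 2 - t * y) * uy ^ 2
  + 4 * (x ^ 2 + y ^ 2) * (x ^ 3 + t * y + x * y ^ 2) * ut ^ 2
  + 2 * (t * x - 7 * x ^ 2 * y + y ^ 3) * ux * uy
  - 4 * (t - 4 * x * y) * (x ^ 2 + y ^ 2) * ux * ut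
  - 4 * (3 * x ^ 4 + 2 * x ^ 2 * y ^ 2 - y ^ 4) * uy * ut
  + 2 * x * v ^ 2 + 4 * y ^ 2 * v * ux - 4 * x * y * v * uy
  + 8 * y * (x ^ 2 + y ^ 2) * v * ut)

def characteristicV2 : ℝ × ℝ × ℝ → ℝ := fun q =>
  let x := q.1; let y := q.2.1; let t := q.2.2
  2 * y * u q - (t - 4 * x * y) * pdx u q - (3 * x ^ 2 - y ^ 2) * pdy u q
    + (2 * y * t + 2 * x ^ 3 + 2 * x * y ^ 2) * pdt u q

end NoetherCurrent

theorem div_noetherCurrentV2_eq_characteristicV2_mul_kohnLaplace {u : ℝ × ℝ × ℝ → ℝ}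
    {p : ℝ × ℝ × ℝ} (hu : ContDiffAt ℝ 2 u p) :
    pdx (noetherCurrentV2₁ u) p + pdy (noetherCurrentV2₂ u) p + pdt (noetherCurrentV2₃ u) p
      = characteristicV2 u p * KohnLaplace u p := by
  have hu₁ : DifferentiableAt ℝ u p := hu.differentiableAt (by norm_num)
  have hDu : DifferentiableAt ℝ (fderiv ℝ u) p :=
    (hu.fderiv_right (m := 1) (by norm_num)).differentiableAt (by norm_num)
  have hsymm := hu.isSymmSndFDerivAt (by simp)
  have hxy := hsymm (0, 1, 0) (1, 0, 0)
  have hxt := hsymm (0, 0, 1) (1, 0, 0)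
  have hyt := hsymm (0, 0, 1) (0, 1, 0)
  unfold noetherCurrentV2₁ noetherCurrentV2₂ noetherCurrentV2₃ characteristicV2 KohnLaplace
    pdx pdy pdt
  simp only [pow_succ, pow_zero, one_mul]
  simp (disch := fun_prop) only [fderiv_fun_mul, fderiv_fun_add, fderiv_fun_sub,
    fderiv_fun_const, fderiv.fst, fderiv.snd, fderiv_fun_id, add_apply, sub_apply, smul_apply,
    zero_apply, Pi.zero_apply, smul_eq_mul, ContinuousLinearMap.comp_apply,
    ContinuousLinearMap.coe_fst', ContinuousLinearMap.coe_snd', ContinuousLinearMap.coe_id', id_eq,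
    fderiv_fderiv_apply_eq hDu, hxy, hxt, hyt]
  ring

/-- conservation law for the Noether symmetry V₂ of the
homogeneous Kohn–Laplace equation Δ_{H¹}u = 0: Div(B) = 0, where
(B₁,B₂,B₃) is the Noether current of
V₂ = (t−4xy)∂_x + (3x²−y²)∂_y − (2yt+2x³+2xy²)∂_t + 2yu∂_u. -/
theorem conservation_law_V2
    (Ω : Set (ℝ × ℝ × ℝ)) (hΩ : IsOpen Ω)
    (u : ℝ × ℝ × ℝ → ℝ) (hu : ContDiffOn ℝ 2 u Ω)
    (hsol : ∀ p ∈ Ω, KohnLaplace u p = 0) :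
    ∀ p ∈ Ω,
      pdx (fun q =>
        let x := q.1; let y := q.2.1; let t := q.2.2
        let ux := pdx u q; let uy := pdy u q; let ut := pdt u q; let v := u q;
        (-(1 / 2) * (t - 4 * x * y) * ux ^ 2
        + (1 / 2) * (t - 4 * x * y) * uy ^ 2
        + (2 * t * (x ^ 2 + 3 * y ^ 2) - 4 * x * y * (x ^ 2 + y ^ 2)) * ut ^ 2
        - (3 * x ^ 2 - y ^ 2) * ux * uy
        + 2 * (x ^ 3 + t * y + x * y ^ 2) * ux * ut
        - 2 * (t * x - x ^ 2 * y - y ^ 3) * uy * ut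
        + 2 * y * v * ux + 4 * y ^ 2 * v * ut)) p
      + pdy (fun q =>
        let x := q.1; let y := q.2.1; let t := q.2.2
        let ux := pdx u q; let uy := pdy u q; let ut := pdt u q; let v := u q;
        ((1 / 2) * (3 * x ^ 2 - y ^ 2) * ux ^ 2
        - (1 / 2) * (3 * x ^ 2 - y ^ 2) * uy ^ 2
        + 2 * (x ^ 4 - 2 * t * x * y - y ^ 4) * ut ^ 2
        - (t - 4 * x * y) * ux * uy
        + 2 * (t * x - x ^ 2 * y - y ^ 3) * ux * ut
        + 2 * (x ^ 3 + t * y + x * y ^ 2) * uy * ut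
        + 2 * y * v * uy - 4 * x * y * v * ut - v ^ 2)) p
      + pdt (fun q =>
        let x := q.1; let y := q.2.1; let t := q.2.2
        let ux := pdx u q; let uy := pdy u q; let ut := pdt u q; let v := u q;
        ((7 * x * y ^ 2 - x ^ 3 - 3 * t * y) * ux ^ 2
        + (5 * x ^ 3 - 3 * x * y ^ 2 - t * y) * uy ^ 2
        + 4 * (x ^ 2 + y ^ 2) * (x ^ 3 + t * y + x * y ^ 2) * ut ^ 2
        + 2 * (t * x - 7 * x ^ 2 * y + y ^ 3) * ux * uy
        - 4 * (t - 4 * x * y) * (x ^ 2 + y ^ 2) * ux * ut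
        - 4 * (3 * x ^ 4 + 2 * x ^ 2 * y ^ 2 - y ^ 4) * uy * ut
        + 2 * x * v ^ 2 + 4 * y ^ 2 * v * ux - 4 * x * y * v * uy
        + 8 * y * (x ^ 2 + y ^ 2) * v * ut)) p = 0 := by
  intro p hp
  have hdiv := div_noetherCurrentV2_eq_characteristicV2_mul_kohnLaplace
    (hu.contDiffAt (hΩ.mem_nhds hp))
  rw [hsol p hp, mul_zero] at hdiv
  exact hdiv
end
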